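/- arXiv:1905.07449 — 3 statements merged into one kernel-verified Lean document; each statement's English description precedes it below -/
import Mathlib

section
/- For distinct states i ≠ j and any state k, the partial derivative of ln(π_i/π_j) with respect to the vertex parameter E_k equals -1 if i = k, equals 1 if j = k, and equals 0 if k is neither i nor j. -/
/-!
Raising `E_k` by `s` multiplies every rate out of `k` by `e^s`. In a spanning tree directed
towards `r` every vertex except `r` has exactly one outgoing edge, so the weight of `T_r` gains
the factor `e^s` if `k ≠ r` and is unchanged if `k = r`. Since `π_i / π_j` is the ratio of
the rooted tree sums (the normalisation cancels), `ln (π_i / π_j)` moves by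
`([k ≠ i] - [k ≠ j]) s`.
-/

open Finset

attribute [local instance] Classical.propDecidable

/-- The transition graph of a rate matrix: an edge between `i ≠ j` whenever
both rates are positive. -/
def transGraph {V : Type*} (W : V → V → ℝ) : SimpleGraph V where
  Adj i j := i ≠ j ∧ 0 < W i j ∧ 0 < W j i
  symm := ⟨fun i j ⟨h, h1, h2⟩ => ⟨h.symm, h2, h1⟩⟩
  loopless := ⟨fun i ⟨h, _, _⟩ => h rfl⟩

/-- `T` is a spanning tree of `G`. -/
def IsSpanningTree {V : Type*} (G T : SimpleGraph V) : Prop := T ≤ G ∧ T.IsTree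

/-- Weight of spanning tree `T` rooted at `r`: product over the edges of `T`,
each directed towards `r`, of the corresponding rate (`W i j` is the rate of
the jump `j → i`). -/
noncomputable def treeWeight {V : Type*} [Fintype V] (W : V → V → ℝ)
    (T : SimpleGraph V) (r : V) : ℝ :=
  ∏ p ∈ Finset.univ.filter
      (fun p : V × V => T.Adj p.1 p.2 ∧ T.dist p.2 r + 1 = T.dist p.1 r),
    W p.2 p.1

/-- Sum of rooted-tree weights over all spanning trees of `G`, rooted at `k`. -/
noncomputable def sumTrees {V : Type*} [Fintype V] [DecidableEq V] (W : V → V → ℝ)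
    (G : SimpleGraph V) (k : V) : ℝ :=
  ∑ T ∈ Finset.univ.filter (fun T : SimpleGraph V => IsSpanningTree G T),
    treeWeight W T k

/-- Steady state via matrix-tree formula. -/
noncomputable def mttPi {V : Type*} [Fintype V] [DecidableEq V] (W : V → V → ℝ)
    (G : SimpleGraph V) (k : V) : ℝ :=
  sumTrees W G k / ∑ l : V, sumTrees W G l

/-- Weight of a walk: product of the rates of its directed edges
(a step `a → b` has rate `W b a`). -/
noncomputable def walkWeight {V : Type*} (W : V → V → ℝ) {G : SimpleGraph V} {u v : V}
    (p : G.Walk u v) : ℝ :=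
  (p.darts.map (fun d => W d.snd d.fst)).prod

/-- Cycle force of a closed walk. -/
noncomputable def cycleForce {V : Type*} (W : V → V → ℝ) {G : SimpleGraph V} {u : V}
    (p : G.Walk u u) : ℝ :=
  Real.log (walkWeight W p / walkWeight W p.reverse)

/-- `Fmax`: the maximum of `|F_C|` over cycles `C` of `G` containing the
edge `{m,n}`; `0` if there is none. -/
noncomputable def Fmax {V : Type*} (W : V → V → ℝ) (G : SimpleGraph V) (m n : V) : ℝ :=
  sSup {x : ℝ | ∃ (u : V) (p : G.Walk u u), p.IsCycle ∧ s(m, n) ∈ p.edges ∧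
    x = |cycleForce W p|}

/-- `F_{i↔j}`: the maximum entropy produced going from `i` to `j` and back
along non-self-intersecting paths. -/
noncomputable def Fbtw {V : Type*} (W : V → V → ℝ) (G : SimpleGraph V) (i j : V) : ℝ :=
  sSup {x : ℝ | ∃ (p : G.Walk i j) (q : G.Walk j i), p.IsPath ∧ q.IsPath ∧
    x = |Real.log (walkWeight W p * walkWeight W q /
          (walkWeight W p.reverse * walkWeight W q.reverse))|}

/-- The parameterized rates `W_ij = exp(-(B_ij - E_j - F_ij/2))` on the edges of `G`. -/
noncomputable def rates {V : Type*} (G : SimpleGraph V) (Bp : V → V → ℝ) (Ep : V → ℝ)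
    (Fp : V → V → ℝ) : V → V → ℝ :=
  fun i j => if G.Adj i j then Real.exp (-(Bp i j - Ep j - Fp i j / 2)) else 0

/-- Steady state as a function of the parameters. -/
noncomputable def piP {V : Type*} [Fintype V] [DecidableEq V] (G : SimpleGraph V)
    (Bp : V → V → ℝ) (Ep : V → ℝ) (Fp : V → V → ℝ) (k : V) : ℝ :=
  mttPi (rates G Bp Ep Fp) G k

/-- Replace the symmetric edge parameter of the edge `{m,n}` by `t`. -/
noncomputable def updB {V : Type*} (Bp : V → V → ℝ) (m n : V) (t : ℝ) : V → V → ℝ :=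
  fun i j => if (i = m ∧ j = n) ∨ (i = n ∧ j = m) then t else Bp i j

/-- Add `t` to the symmetric edge parameters of all edges in `S`. -/
noncomputable def updBadd {V : Type*} (Bp : V → V → ℝ) (S : Set (Sym2 V)) (t : ℝ) : V → V → ℝ :=
  fun i j => if s(i, j) ∈ S then Bp i j + t else Bp i j

/-- Replace the antisymmetric edge parameter of the edge `{i,j}` by `t`
(and by `-t` in the reverse direction). -/
noncomputable def updF {V : Type*} (Fp : V → V → ℝ) (i j : V) (t : ℝ) : V → V → ℝ :=
  fun a b => if a = i ∧ b = j then t else if a = j ∧ b = i then -t else Fp a b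

/-- The full rate matrix, with diagonal entries fixed by conservation of probability. -/
noncomputable def fullW {V : Type*} [Fintype V] [DecidableEq V] (W : V → V → ℝ) :
    V → V → ℝ :=
  fun i j => if i = j then -∑ l ∈ Finset.univ.filter (fun l => l ≠ j), W l j else W i j

namespace SimpleGraph

variable {V : Type*} {G T : SimpleGraph V} {r u₁ u₂ v : V}

lemma Reachable.exists_adj_dist_add_one (h : G.Reachable v r) (hv : v ≠ r) :
    ∃ u, G.Adj v u ∧ G.dist u r + 1 = G.dist v r := by
  obtain ⟨p, hp⟩ := h.exists_walk_length_eq_dist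
  cases p with
  | nil => exact absurd rfl hv
  | @cons _ u _ hvu q =>
    refine ⟨u, hvu, le_antisymm ?_ ?_⟩
    · have := dist_le q
      rw [Walk.length_cons] at hp
      omega
    · obtain ⟨q', hq'⟩ := (hvu.reachable.symm.trans h).exists_walk_length_eq_dist
      simpa [hq'] using dist_le (Walk.cons hvu q')

lemma IsTree.eq_of_adj_of_dist_add_one (hT : T.IsTree)
    (h₁ : T.Adj v u₁) (hd₁ : T.dist u₁ r + 1 = T.dist v r)
    (h₂ : T.Adj v u₂) (hd₂ : T.dist u₂ r + 1 = T.dist v r) : u₁ = u₂ := by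
  have shortestPath : ∀ u, T.Adj v u → T.dist u r + 1 = T.dist v r →
      ∃ p : T.Walk v r, p.IsPath ∧ p.getVert 1 = u := by
    intro u hvu hd
    obtain ⟨q, hq⟩ := hT.connected.exists_walk_length_eq_dist u r
    refine ⟨Walk.cons hvu q, (Walk.cons hvu q).isPath_of_length_eq_dist ?_, by simp⟩
    rw [Walk.length_cons, hq, hd]
  obtain ⟨p₁, hp₁, rfl⟩ := shortestPath u₁ h₁ hd₁
  obtain ⟨p₂, hp₂, rfl⟩ := shortestPath u₂ h₂ hd₂
  rw [(hT.existsUnique_path v r).unique hp₁ hp₂]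

end SimpleGraph

section TreeWeight

variable {V : Type*} [Fintype V]

lemma treeWeight_mul_source [DecidableEq V] {T : SimpleGraph V} (hT : T.IsTree)
    (W : V → V → ℝ) (g : V → ℝ) (r : V) :
    treeWeight (fun a b => g b * W a b) T r = (∏ v ∈ univ.erase r, g v) * treeWeight W T r := by
  unfold treeWeight
  rw [prod_mul_distrib]
  congr 1
  -- `Prod.fst` maps the edges of `T` directed towards `r` bijectively onto the vertices `≠ r`
  refine prod_nbij Prod.fst ?_ ?_ ?_ (fun _ _ => rfl)
  · rintro ⟨a, b⟩ hab
    simp only [mem_filter, mem_univ, true_and] at hab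
    refine mem_erase.2 ⟨?_, mem_univ a⟩
    intro (har : a = r)
    rw [har, SimpleGraph.dist_self] at hab
    omega
  · rintro ⟨a, b⟩ hab ⟨a', b'⟩ hab' (rfl : a = a')
    simp only [coe_filter, mem_univ, true_and, Set.mem_ofPred_eq] at hab hab'
    rw [hT.eq_of_adj_of_dist_add_one hab.1 hab.2 hab'.1 hab'.2]
  · intro a ha
    obtain ⟨b, hab, hd⟩ := (hT.connected a r).exists_adj_dist_add_one (mem_erase.1 ha).1
    exact ⟨(a, b), by simp [hab, hd], rfl⟩

lemma sumTrees_mul_source [DecidableEq V] (W : V → V → ℝ) (G : SimpleGraph V) (g : V → ℝ)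
    (r : V) :
    sumTrees (fun a b => g b * W a b) G r = (∏ v ∈ univ.erase r, g v) * sumTrees W G r := by
  unfold sumTrees
  rw [mul_sum]
  exact sum_congr rfl fun T hT => treeWeight_mul_source (mem_filter.1 hT).2.2 W g r

end TreeWeight

lemma rates_update_vertex {V : Type*} [DecidableEq V] (G : SimpleGraph V) (Bp : V → V → ℝ)
    (Ep : V → ℝ) (Fp : V → V → ℝ) (k : V) (t : ℝ) :
    rates G Bp (Function.update Ep k t) Fp
      = fun a b => Real.exp ((Pi.single k (t - Ep k) : V → ℝ) b) * rates G Bp Ep Fp a b := by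
  ext a b
  unfold rates
  split_ifs
  · rw [← Real.exp_add]
    congr 1
    rcases eq_or_ne b k with rfl | hb
    · simp only [Function.update_self, Pi.single_eq_same]
      ring
    · simp only [Function.update_of_ne hb, Pi.single_eq_of_ne hb]
      ring
  · rw [mul_zero]

section Rates

variable {V : Type*} [Fintype V] [DecidableEq V] {G : SimpleGraph V} {Bp : V → V → ℝ}
  {Ep : V → ℝ} {Fp : V → V → ℝ}

lemma sumTrees_rates_update_vertex (k r : V) (t : ℝ) :
    sumTrees (rates G Bp (Function.update Ep k t) Fp) G r
      = Real.exp (if k = r then 0 else t - Ep k) * sumTrees (rates G Bp Ep Fp) G r := by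
  rw [rates_update_vertex, sumTrees_mul_source, ← Real.exp_sum, sum_pi_single']
  simp

lemma sumTrees_rates_pos (hG : G.Connected) (r : V) : 0 < sumTrees (rates G Bp Ep Fp) G r := by
  obtain ⟨T, hTG, hT⟩ := hG.exists_isTree_le
  refine sum_pos (fun T' hT' => prod_pos fun p hp => ?_)
    ⟨T, mem_filter.2 ⟨mem_univ T, hTG, hT⟩⟩
  have hadj : G.Adj p.2 p.1 := (mem_filter.1 hT').2.1 (mem_filter.1 hp).2.1.symm
  simp only [rates, if_pos hadj, Real.exp_pos]

lemma hasDerivAt_log_sumTrees_rates_update_vertex (hG : G.Connected) (k r : V) :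
    HasDerivAt (fun t => Real.log (sumTrees (rates G Bp (Function.update Ep k t) Fp) G r))
      (if k = r then 0 else 1) (Ep k) := by
  have hpos := sumTrees_rates_pos (Bp := Bp) (Ep := Ep) (Fp := Fp) hG r
  have hlog : (fun t => Real.log (sumTrees (rates G Bp (Function.update Ep k t) Fp) G r))
      = fun t => (if k = r then 0 else 1) * (t - Ep k)
        + Real.log (sumTrees (rates G Bp Ep Fp) G r) := by
    ext t
    rw [sumTrees_rates_update_vertex, Real.log_mul (Real.exp_ne_zero _) hpos.ne', Real.log_exp]
    split_ifs <;> ring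
  rw [hlog]
  simpa using (((hasDerivAt_id (Ep k)).sub_const (Ep k)).const_mul
    (if k = r then (0 : ℝ) else 1)).add_const (Real.log (sumTrees (rates G Bp Ep Fp) G r))

end Rates

lemma log_mttPi_div_mttPi {V : Type*} [Fintype V] [DecidableEq V] {W : V → V → ℝ}
    {G : SimpleGraph V} (hW : ∀ l, 0 < sumTrees W G l) (i j : V) :
    Real.log (mttPi W G i / mttPi W G j)
      = Real.log (sumTrees W G i) - Real.log (sumTrees W G j) := by
  have hZ : (∑ l, sumTrees W G l) ≠ 0 := (sum_pos (fun l _ => hW l) ⟨i, mem_univ i⟩).ne'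
  rw [mttPi, mttPi, div_div_div_cancel_right₀ hZ, Real.log_div (hW i).ne' (hW j).ne']

theorem stmt2_general {V : Type*} [Fintype V] [DecidableEq V]
    (G : SimpleGraph V) (hG : G.Connected)
    (Bp : V → V → ℝ) (Ep : V → ℝ) (Fp : V → V → ℝ)
    (i j k : V) (hij : i ≠ j) :
    HasDerivAt
      (fun t => Real.log (piP G Bp (Function.update Ep k t) Fp i /
                          piP G Bp (Function.update Ep k t) Fp j))
      (if i = k then (-1 : ℝ) else if j = k then 1 else 0) (Ep k) := by
  have hlog : (fun t => Real.log (piP G Bp (Function.update Ep k t) Fp i /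
      piP G Bp (Function.update Ep k t) Fp j))
      = fun t => Real.log (sumTrees (rates G Bp (Function.update Ep k t) Fp) G i)
        - Real.log (sumTrees (rates G Bp (Function.update Ep k t) Fp) G j) :=
    funext fun t => log_mttPi_div_mttPi (fun l => sumTrees_rates_pos hG l) i j
  have hcoeff : (if i = k then (-1 : ℝ) else if j = k then 1 else 0)
      = (if k = i then 0 else 1) - (if k = j then 0 else 1) := by
    rcases eq_or_ne i k with rfl | hik
    · simp [hij]
    · rcases eq_or_ne j k with rfl | hjk
      · simp [hik, Ne.symm hik]
      · simp [hik, hjk, Ne.symm hik, Ne.symm hjk]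
  rw [hlog, hcoeff]
  exact (hasDerivAt_log_sumTrees_rates_update_vertex hG k i).sub
    (hasDerivAt_log_sumTrees_rates_update_vertex hG k j)

/-- response of the log-ratio `ln(π_i/π_j)` (`i ≠ j`) to a vertex
perturbation: `-1` if `i = k`, `1` if `j = k`, and `0` otherwise. -/
theorem stmt2 {V : Type*} [Fintype V] [DecidableEq V]
    (G : SimpleGraph V) (hG : G.Connected)
    (Bp : V → V → ℝ) (Ep : V → ℝ) (Fp : V → V → ℝ)
    (hB : ∀ i j, Bp i j = Bp j i) (hF : ∀ i j, Fp i j = -Fp j i)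
    (i j k : V) (hij : i ≠ j) :
    HasDerivAt
      (fun t => Real.log (piP G Bp (Function.update Ep k t) Fp i /
                          piP G Bp (Function.update Ep k t) Fp j))
      (if i = k then (-1 : ℝ) else if j = k then 1 else 0) (Ep k) :=
  stmt2_general G hG Bp Ep Fp i j k hij
end

section
/- For every state k and every edge {i,j} of G, the response of the steady state to the antisymmetric edge parameter satisfies |∂π_k / ∂F_ij| ≤ π_k (1 - π_k) ≤ 1/4. -/
open Finset

attribute [local instance] Classical.propDecidable

/-!
Changing `F_ij` to `t` multiplies every rooted tree weight by `exp (a t / 2)` with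
`a ∈ {-1, 0, 1}` (the edge `{i,j}` occurs in a tree at most once, directed one way or
the other). Hence each numerator `N_l(t) = ∑_T w(T_l)` of the matrix-tree formula satisfies
`|N_l'| ≤ N_l / 2`, and for `π_k = N_k / (N_k + M)` with `M = ∑_{l ≠ k} N_l` the quotient rule gives
`|π_k'| = |N_k' M - N_k M'| / (N_k + M)² ≤ N_k M / (N_k + M)² = π_k (1 - π_k)`;
the denominator is positive because a connected graph has a spanning tree.
-/

lemma abs_deriv_div_add_le {f g : ℝ → ℝ} {f' g' t C : ℝ}
    (hf : HasDerivAt f f' t) (hg : HasDerivAt g g' t) (hf0 : 0 ≤ f t) (hg0 : 0 ≤ g t)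
    (hfg : f t + g t ≠ 0) (hf' : |f'| ≤ C * f t) (hg' : |g'| ≤ C * g t) :
    |deriv (fun s => f s / (f s + g s)) t|
      ≤ 2 * C * (f t / (f t + g t) * (1 - f t / (f t + g t))) := by
  have hquot : f' * (f t + g t) - f t * (f' + g') = f' * g t - f t * g' := by ring
  have hnum : |f' * g t - f t * g'| ≤ 2 * C * (f t * g t) :=
    calc |f' * g t - f t * g'| ≤ |f'| * g t + f t * |g'| := by
          simpa only [abs_mul, abs_of_nonneg hf0, abs_of_nonneg hg0] using
            abs_sub (f' * g t) (f t * g')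
      _ ≤ C * f t * g t + f t * (C * g t) := by gcongr
      _ = 2 * C * (f t * g t) := by ring
  have hone : 1 - f t / (f t + g t) = g t / (f t + g t) := by field_simp; ring
  rw [(hf.fun_div (hf.fun_add hg) hfg).deriv, hquot, abs_div, abs_sq, hone,
    div_mul_div_comm, ← pow_two, mul_div_assoc']
  exact div_le_div_of_nonneg_right hnum (sq_nonneg _)

lemma abs_deriv_div_sum_le {ι : Type*} [Fintype ι] [DecidableEq ι] {N : ι → ℝ → ℝ}
    {N' : ι → ℝ} {t C : ℝ} (hN : ∀ l, HasDerivAt (N l) (N' l) t) (hN0 : ∀ l, 0 ≤ N l t)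
    (hsum : ∑ l, N l t ≠ 0) (hN' : ∀ l, |N' l| ≤ C * N l t) (k : ι) :
    |deriv (fun s => N k s / ∑ l, N l s) t|
      ≤ 2 * C * (N k t / (∑ l, N l t) * (1 - N k t / ∑ l, N l t)) := by
  have hsplit : ∀ s, ∑ l, N l s = N k s + ∑ l ∈ univ.erase k, N l s :=
    fun s => (add_sum_erase univ (N · s) (mem_univ k)).symm
  simp only [hsplit]
  rw [hsplit] at hsum
  refine abs_deriv_div_add_le (hN k) (HasDerivAt.fun_sum fun l _ => hN l) (hN0 k)
    (sum_nonneg fun l _ => hN0 l) hsum (hN' k) ?_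
  calc |∑ l ∈ univ.erase k, N' l| ≤ ∑ l ∈ univ.erase k, C * N l t :=
        (abs_sum_le_sum_abs _ _).trans (sum_le_sum fun l _ => hN' l)
    _ = C * ∑ l ∈ univ.erase k, N l t := (mul_sum _ _ _).symm

lemma hasDerivAt_sum_mul_exp {ι : Type*} (s : Finset ι) (c a : ι → ℝ) (t : ℝ) :
    HasDerivAt (fun t => ∑ x ∈ s, c x * Real.exp (a x * t))
      (∑ x ∈ s, c x * a x * Real.exp (a x * t)) t :=
  HasDerivAt.fun_sum fun x _ => by
    simpa [mul_comm, mul_left_comm, mul_assoc] using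
      (((hasDerivAt_id t).const_mul (a x)).exp.const_mul (c x))

lemma abs_sum_mul_mul_exp_le {ι : Type*} {s : Finset ι} {c a : ι → ℝ} {C : ℝ}
    (hc : ∀ x ∈ s, 0 ≤ c x) (ha : ∀ x ∈ s, |a x| ≤ C) (t : ℝ) :
    |∑ x ∈ s, c x * a x * Real.exp (a x * t)| ≤ C * ∑ x ∈ s, c x * Real.exp (a x * t) := by
  rw [mul_sum]
  refine (abs_sum_le_sum_abs _ _).trans (sum_le_sum fun x hx => ?_)
  rw [abs_mul, abs_mul, abs_of_nonneg (hc x hx), abs_of_pos (Real.exp_pos _), mul_right_comm,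
    mul_left_comm]
  linear_combination
    mul_le_mul_of_nonneg_right (ha x hx) (mul_nonneg (hc x hx) (Real.exp_pos (a x * t)).le)

section TreeWeights

variable {V : Type*} [Fintype V]

/-- The edges of `T` directed towards `r`; `(a, b)` stands for the jump `a → b`. -/
noncomputable def rootedEdges (T : SimpleGraph V) (r : V) : Finset (V × V) :=
  univ.filter fun p : V × V => T.Adj p.1 p.2 ∧ T.dist p.2 r + 1 = T.dist p.1 r

lemma treeWeight_eq_prod (W : V → V → ℝ) (T : SimpleGraph V) (r : V) :
    treeWeight W T r = ∏ p ∈ rootedEdges T r, W p.2 p.1 := rfl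

lemma treeWeight_nonneg {W : V → V → ℝ} (hW : ∀ a b, 0 ≤ W a b) (T : SimpleGraph V) (r : V) :
    0 ≤ treeWeight W T r :=
  prod_nonneg fun p _ => hW p.2 p.1

lemma treeWeight_pos {W : V → V → ℝ} {T : SimpleGraph V} (hW : ∀ a b, T.Adj a b → 0 < W a b)
    (r : V) : 0 < treeWeight W T r :=
  prod_pos fun _ hp => hW _ _ (mem_filter.1 hp).2.1.symm

lemma sumTrees_pos [DecidableEq V] {W : V → V → ℝ} {G : SimpleGraph V} (hG : G.Connected)
    (hW0 : ∀ a b, 0 ≤ W a b) (hW : ∀ a b, G.Adj a b → 0 < W a b) (k : V) :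
    0 < sumTrees W G k := by
  obtain ⟨T, hTG, hT⟩ := hG.exists_isTree_le
  exact sum_pos' (fun T _ => treeWeight_nonneg hW0 T k)
    ⟨T, mem_filter.2 ⟨mem_univ _, hTG, hT⟩, treeWeight_pos (fun a b h => hW a b (hTG h)) k⟩

/-- `+1` on the jump `j → i`, `-1` on the jump `i → j`, `0` on every other directed edge. -/
noncomputable def edgeSign (i j : V) (p : V × V) : ℝ :=
  (if p = (j, i) then 1 else 0) - (if p = (i, j) then 1 else 0)

noncomputable def treeEdgeSign (i j : V) (T : SimpleGraph V) (r : V) : ℝ :=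
  ∑ p ∈ rootedEdges T r, edgeSign i j p

lemma abs_treeEdgeSign_le (i j : V) (T : SimpleGraph V) (r : V) :
    |treeEdgeSign i j T r| ≤ 1 := by
  unfold treeEdgeSign edgeSign
  rw [sum_sub_distrib, sum_ite_eq' _ (j, i) (fun _ => (1 : ℝ)),
    sum_ite_eq' _ (i, j) (fun _ => (1 : ℝ))]
  split_ifs <;> norm_num

end TreeWeights

lemma updF_self {V : Type*} {Fp : V → V → ℝ} (hF : ∀ i j, Fp i j = -Fp j i) (i j : V) :
    updF Fp i j (Fp i j) = Fp := by
  funext a b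
  unfold updF
  split_ifs with h₁ h₂
  · rw [h₁.1, h₁.2]
  · rw [h₂.1, h₂.2, hF j i]
  · rfl

section Parameters

variable {V : Type*} (G : SimpleGraph V) (Bp : V → V → ℝ) (Ep : V → ℝ) (Fp : V → V → ℝ)

lemma rates_nonneg (a b : V) : 0 ≤ rates G Bp Ep Fp a b := by
  unfold rates; split_ifs
  exacts [(Real.exp_pos _).le, le_rfl]

lemma rates_pos {a b : V} (h : G.Adj a b) : 0 < rates G Bp Ep Fp a b := by
  simp only [rates, if_pos h, Real.exp_pos]

lemma rates_updF {i j : V} (hij : i ≠ j) (a b : V) (t : ℝ) :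
    rates G Bp Ep (updF Fp i j t) b a
      = rates G Bp Ep (updF Fp i j 0) b a * Real.exp (edgeSign i j (a, b) / 2 * t) := by
  unfold rates updF edgeSign
  by_cases h : G.Adj b a
  · simp only [if_pos h, Prod.mk.injEq]
    rw [← Real.exp_add]
    congr 1
    split_ifs <;> grind
  · simp only [if_neg h, zero_mul]

variable [Fintype V]

lemma treeWeight_updF {i j : V} (hij : i ≠ j) (T : SimpleGraph V) (r : V) (t : ℝ) :
    treeWeight (rates G Bp Ep (updF Fp i j t)) T r
      = treeWeight (rates G Bp Ep (updF Fp i j 0)) T r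
        * Real.exp (treeEdgeSign i j T r / 2 * t) := by
  simp only [treeWeight_eq_prod, rates_updF G Bp Ep Fp hij _ _ t, prod_mul_distrib,
    ← Real.exp_sum, treeEdgeSign, sum_div, sum_mul]

lemma sumTrees_updF [DecidableEq V] {i j : V} (hij : i ≠ j) (k : V) (t : ℝ) :
    sumTrees (rates G Bp Ep (updF Fp i j t)) G k
      = ∑ T ∈ univ.filter (IsSpanningTree G), treeWeight (rates G Bp Ep (updF Fp i j 0)) T k
        * Real.exp (treeEdgeSign i j T k / 2 * t) :=
  sum_congr rfl fun T _ => treeWeight_updF G Bp Ep Fp hij T k t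

lemma exists_hasDerivAt_sumTrees_updF [DecidableEq V] {i j : V} (hij : i ≠ j) (k : V)
    (t : ℝ) : ∃ N', HasDerivAt (fun t => sumTrees (rates G Bp Ep (updF Fp i j t)) G k) N' t ∧
      |N'| ≤ 1 / 2 * sumTrees (rates G Bp Ep (updF Fp i j t)) G k := by
  simp only [sumTrees_updF G Bp Ep Fp hij]
  exact ⟨_, hasDerivAt_sum_mul_exp _ _ _ t, abs_sum_mul_mul_exp_le
    (fun T _ => treeWeight_nonneg (rates_nonneg G Bp Ep _) T k)
    (fun T _ => by rw [abs_div, abs_two]; linarith [abs_treeEdgeSign_le i j T k]) t⟩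

end Parameters

theorem stmt14_general {V : Type*} [Fintype V] [DecidableEq V]
    (G : SimpleGraph V) (hG : G.Connected)
    (Bp : V → V → ℝ) (Ep : V → ℝ) (Fp : V → V → ℝ)
    (hF : ∀ i j, Fp i j = -Fp j i)
    (i j : V) (hij : G.Adj i j) (k : V) :
    |deriv (fun t => piP G Bp Ep (updF Fp i j t) k) (Fp i j)|
        ≤ piP G Bp Ep Fp k * (1 - piP G Bp Ep Fp k) ∧
      piP G Bp Ep Fp k * (1 - piP G Bp Ep Fp k) ≤ 1 / 4 := by
  have hupd := updF_self hF i j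
  choose N' hderiv hbound using
    fun l => exists_hasDerivAt_sumTrees_updF G Bp Ep Fp hij.ne l (Fp i j)
  have hpos : ∀ l, 0 < sumTrees (rates G Bp Ep (updF Fp i j (Fp i j))) G l := by
    rw [hupd]
    exact sumTrees_pos hG (rates_nonneg G Bp Ep Fp) fun _ _ => rates_pos G Bp Ep Fp
  have hresponse := abs_deriv_div_sum_le hderiv (fun l => (hpos l).le)
    (sum_pos (fun l _ => hpos l) ⟨k, mem_univ k⟩).ne' hbound k
  rw [hupd, show (2 : ℝ) * (1 / 2) = 1 by norm_num, one_mul] at hresponse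
  exact ⟨hresponse, by nlinarith [sq_nonneg (2 * piP G Bp Ep Fp k - 1)]⟩

/-- `|∂π_k/∂F_ij| ≤ π_k(1-π_k) ≤ 1/4`. -/
theorem stmt14 {V : Type*} [Fintype V] [DecidableEq V]
    (G : SimpleGraph V) (hG : G.Connected)
    (Bp : V → V → ℝ) (Ep : V → ℝ) (Fp : V → V → ℝ)
    (hB : ∀ i j, Bp i j = Bp j i) (hF : ∀ i j, Fp i j = -Fp j i)
    (i j : V) (hij : G.Adj i j) (k : V) :
    |deriv (fun t => piP G Bp Ep (updF Fp i j t) k) (Fp i j)|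
        ≤ piP G Bp Ep Fp k * (1 - piP G Bp Ep Fp k) ∧
      piP G Bp Ep Fp k * (1 - piP G Bp Ep Fp k) ≤ 1 / 4 :=
  stmt14_general G hG Bp Ep Fp hF i j hij k
end

section
/- (Re-rooting identity) For any spanning tree T of G and any two vertices v, w, one has w(T_v) · w(T_{v→w}) = w(T_w) · w(T_{w→v}), where T_{v→w} denotes the unique directed path in T from v to w (the empty path, of weight 1, if v = w). -/
open Finset

attribute [local instance] Classical.propDecidable

/-
Moving the root of a spanning tree across a single edge `{v, w}` reverses that edge and leaves
every other edge as it was: an edge `a — b` points from `a` to `b` towards the root `r` exactly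
when `r` lies on `b`'s side of the bridge `{a, b}`, and `v` and `w` lie on the same side of every
other bridge. Hence `w(T_v) · W w v = w(T_w) · W v w`, and the identity follows by induction
along the path from `v` to `w`.
-/

namespace SimpleGraph

variable {V : Type*} {T : SimpleGraph V}

lemma IsTree.dist_add_one_eq_iff_reachable_deleteEdges (hT : T.IsTree) {a b : V}
    (hab : T.Adj a b) (r : V) :
    T.dist b r + 1 = T.dist a r ↔ (T.deleteEdges {s(a, b)}).Reachable b r := by
  have toward {a b : V} (h : T.dist b r + 1 = T.dist a r) :
      (T.deleteEdges {s(a, b)}).Reachable b r := by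
    obtain ⟨q, hq⟩ := hT.connected.exists_walk_length_eq_dist b r
    refine reachable_deleteEdges_iff_exists_walk.mpr ⟨q, fun he => ?_⟩
    have ha := q.fst_mem_support_of_mem_edges he
    have := (T.dist_le (q.dropUntil a ha)).trans (q.length_dropUntil_le_length ha)
    omega
  refine ⟨toward, fun hb => ?_⟩
  have := T.dist_comm (u := r) (v := a)
  have := T.dist_comm (u := r) (v := b)
  rcases hT.dist_eq_dist_add_one_of_adj r hab with h | h
  · omega
  · have ha : (T.deleteEdges {s(a, b)}).Reachable a r := Sym2.eq_swap ▸ toward (by omega)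
    exact absurd (ha.trans hb.symm)
      (isAcyclic_iff_forall_adj_isBridge.mp hT.isAcyclic hab)

lemma IsTree.dist_add_one_eq_iff_of_adj_of_ne (hT : T.IsTree) {v w a b : V} (hvw : T.Adj v w)
    (hab : T.Adj a b) (hne : s(a, b) ≠ s(v, w)) :
    T.dist b v + 1 = T.dist a v ↔ T.dist b w + 1 = T.dist a w := by
  have hvw' : (T.deleteEdges {s(a, b)}).Reachable v w :=
    (deleteEdges_adj.mpr ⟨hvw, by simpa [eq_comm] using hne⟩).reachable
  rw [hT.dist_add_one_eq_iff_reachable_deleteEdges hab,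
    hT.dist_add_one_eq_iff_reachable_deleteEdges hab]
  exact ⟨fun h => h.trans hvw', fun h => h.trans hvw'.symm⟩

end SimpleGraph

open SimpleGraph

section Reroot

variable {V : Type*} (W : V → V → ℝ) {T : SimpleGraph V}

lemma walkWeight_cons {u v w : V} (h : T.Adj u v) (p : T.Walk v w) :
    walkWeight W (Walk.cons h p) = W v u * walkWeight W p := by
  simp [walkWeight]

lemma walkWeight_reverse_cons {u v w : V} (h : T.Adj u v) (p : T.Walk v w) :
    walkWeight W (Walk.cons h p).reverse = walkWeight W p.reverse * W u v := by
  simp [walkWeight, Walk.darts_append]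

lemma treeWeight_mul_eq_of_adj [Fintype V] (hT : T.IsTree) {v w : V} (hvw : T.Adj v w) :
    treeWeight W T v * W w v = treeWeight W T w * W v w := by
  set S : V → Finset (V × V) := fun r =>
    univ.filter (fun p : V × V => T.Adj p.1 p.2 ∧ T.dist p.2 r + 1 = T.dist p.1 r)
  have hv : (w, v) ∈ S v := by simp [S, hvw.symm, dist_eq_one_iff_adj.mpr hvw.symm]
  have hw : (v, w) ∈ S w := by simp [S, hvw, dist_eq_one_iff_adj.mpr hvw]
  have hS : (S v).erase (w, v) = (S w).erase (v, w) := by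
    ext ⟨a, b⟩
    simp only [S, mem_erase, mem_filter, mem_univ, true_and, ne_eq, Prod.mk.injEq]
    by_cases he : s(a, b) = s(v, w)
    · rcases Sym2.eq_iff.mp he with ⟨rfl, rfl⟩ | ⟨rfl, rfl⟩ <;> simp
    · have hba : ¬(a = w ∧ b = v) := by rintro ⟨rfl, rfl⟩; exact he Sym2.eq_swap
      have hab : ¬(a = v ∧ b = w) := by rintro ⟨rfl, rfl⟩; exact he rfl
      simp only [hba, hab, not_false_eq_true, true_and]
      exact and_congr_right (hT.dist_add_one_eq_iff_of_adj_of_ne hvw · he)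
  rw [treeWeight, treeWeight, ← mul_prod_erase _ _ hv, ← mul_prod_erase _ _ hw, hS]
  ring

lemma treeWeight_mul_walkWeight_eq [Fintype V] (hT : T.IsTree) {v w : V} (p : T.Walk v w) :
    treeWeight W T v * walkWeight W p = treeWeight W T w * walkWeight W p.reverse := by
  induction p with
  | nil => rfl
  | cons h p ih =>
    rw [walkWeight_cons, walkWeight_reverse_cons, ← mul_assoc, treeWeight_mul_eq_of_adj W hT h,
      mul_right_comm, ih, mul_assoc]

end Reroot

theorem stmt15_general {V : Type*} [Fintype V] (W : V → V → ℝ)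
    (T : SimpleGraph V) (hT : IsSpanningTree (transGraph W) T)
    (v w : V) (p : T.Walk v w) (hp : p.IsPath) (q : T.Walk w v) (hq : q.IsPath) :
    treeWeight W T v * walkWeight W p = treeWeight W T w * walkWeight W q := by
  obtain rfl : q = p.reverse := congrArg Subtype.val <|
    (hT.2.isAcyclic.subsingleton_path w v).elim ⟨q, hq⟩ ⟨p.reverse, hp.reverse⟩
  exact treeWeight_mul_walkWeight_eq W hT.2 p

/-- re-rooting identity: for a spanning tree `T` and vertices
`v, w`, `w(T_v)·w(T_{v→w}) = w(T_w)·w(T_{w→v})`, where `T_{v→w}` is the unique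
path in `T` from `v` to `w`. -/
theorem stmt15 {V : Type*} [Fintype V] [DecidableEq V] (W : V → V → ℝ)
    (hoff : ∀ i j, i ≠ j → 0 ≤ W i j)
    (hsym : ∀ i j, i ≠ j → (0 < W i j ↔ 0 < W j i))
    (hconn : (transGraph W).Connected)
    (T : SimpleGraph V) (hT : IsSpanningTree (transGraph W) T)
    (v w : V) (p : T.Walk v w) (hp : p.IsPath) (q : T.Walk w v) (hq : q.IsPath) :
    treeWeight W T v * walkWeight W p = treeWeight W T w * walkWeight W q :=
  stmt15_general W T hT v w p hp q hq
end
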